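/- Let ℝ^d_+ = {(x′, x_d) ∈ ℝ^{d−1} × ℝ : x_d > 0}, 1 ≤ p < ∞, and let u be a C^1 function on the closed half-space with compact support. Then ∫_{ℝ^{d−1}} |u(x′,0)|^p dx′ ≤ p · ‖u‖_{L^p(ℝ^d_+)}^{p−1} · ‖∂_{x_d} u‖_{L^p(ℝ^d_+)}, and consequently ‖u(·,0)‖_{L^p(ℝ^{d−1})} ≤ p^{1/p} ‖u‖_{L^p(ℝ^d_+)}^{(p−1)/p} ‖u‖_{W^{1,p}(ℝ^d_+)}^{1/p}. -/

import Mathlib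

open MeasureTheory
open scoped ENNReal NNReal
noncomputable section

abbrev Euc (d : ℕ) := EuclideanSpace ℝ (Fin d)

/-- Classical partial derivative in direction `i`. -/
def pder {d : ℕ} (i : Fin d) (f : Euc d → ℂ) : Euc d → ℂ :=
  fun x => fderiv ℝ f x (EuclideanSpace.single i (1 : ℝ))

/-- Classical mixed partial derivative `∂^α` for a multi-index `α`. -/
def mder {d : ℕ} (α : Fin d → ℕ) (f : Euc d → ℂ) : Euc d → ℂ :=
  (List.finRange d).foldr (fun i g => (pder i)^[α i] g) f

/-- Test functions on `Ω`. -/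
def IsTestOn {d : ℕ} (Ω : Set (Euc d)) (φ : Euc d → ℂ) : Prop :=
  ContDiff ℝ (⊤ : ℕ∞) φ ∧ HasCompactSupport φ ∧ tsupport φ ⊆ Ω

/-- `v` is the weak derivative `∂^α u` on `Ω`. -/
def HasWeakDeriv {d : ℕ} (Ω : Set (Euc d)) (α : Fin d → ℕ) (u v : Euc d → ℂ) : Prop :=
  ∀ φ : Euc d → ℂ, IsTestOn Ω φ →
    ∫ x in Ω, u x * mder α φ x = (-1 : ℂ) ^ (∑ i, α i) * ∫ x in Ω, v x * φ x

/-- `u ∈ W^{k,p}(Ω)`, with system of weak derivatives `D`. -/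
structure MemSobolev {d : ℕ} (k : ℕ) (p : ℝ) (Ω : Set (Euc d)) (u : Euc d → ℂ)
    (D : (Fin d → ℕ) → Euc d → ℂ) : Prop where
  zero : D (fun _ => 0) = u
  weak : ∀ α : Fin d → ℕ, (∑ i, α i) ≤ k → HasWeakDeriv Ω α u (D α)
  lp : ∀ α : Fin d → ℕ, (∑ i, α i) ≤ k →
    MemLp (D α) (ENNReal.ofReal p) (volume.restrict Ω)

/-- Standard Sobolev norm `‖u‖_{k,p,Ω}`, computed from the derivative system `D`. -/
def sobNorm {d : ℕ} (k : ℕ) (p : ℝ) (Ω : Set (Euc d))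
    (D : (Fin d → ℕ) → Euc d → ℂ) : ℝ :=
  (∑ α : Fin d → Fin (k + 1), if (∑ i, (α i : ℕ)) ≤ k then
      ∫ x in Ω, ‖D (fun i => (α i : ℕ)) x‖ ^ p else 0) ^ (1 / p)

/-- Top-order Sobolev seminorm `|u|_{k,p,Ω}` (for `k = 1` this is `‖∇u‖_{L^p(Ω)}`). -/
def sobSemiNorm {d : ℕ} (k : ℕ) (p : ℝ) (Ω : Set (Euc d))
    (D : (Fin d → ℕ) → Euc d → ℂ) : ℝ :=
  (∑ α : Fin d → Fin (k + 1), if (∑ i, (α i : ℕ)) = k then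
      ∫ x in Ω, ‖D (fun i => (α i : ℕ)) x‖ ^ p else 0) ^ (1 / p)

/-- `L^p(Ω)` norm. -/
def lpNorm {d : ℕ} (p : ℝ) (Ω : Set (Euc d)) (u : Euc d → ℂ) : ℝ :=
  (∫ x in Ω, ‖u x‖ ^ p) ^ (1 / p)

/-- `L^p` norm on the boundary `∂Ω`, w.r.t. the `d`-dimensional Hausdorff (surface)
measure in `ℝ^{d+1}`. -/
def bdryLpNorm {d : ℕ} (p : ℝ) (Ω : Set (Euc (d + 1))) (v : Euc (d + 1) → ℂ) : ℝ :=
  (∫ x in frontier Ω, ‖v x‖ ^ p ∂(μH[(d : ℝ)])) ^ (1 / p)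

/-- Bounded Lipschitz domain: bounded, open, connected, and near each boundary point,
in suitable rotated coordinates, `Ω` is the region above the graph of a Lipschitz function
and `∂Ω` is the graph. -/
def IsLipschitzDomain {d : ℕ} (Ω : Set (Euc (d + 1))) : Prop :=
  Bornology.IsBounded Ω ∧ IsOpen Ω ∧ IsConnected Ω ∧
  ∀ x ∈ frontier Ω, ∃ (e : Euc (d + 1) ≃ᵢ Euc (d + 1)) (f : Euc d → ℝ) (K : NNReal)
      (U : Set (Euc (d + 1))), LipschitzWith K f ∧ IsOpen U ∧ x ∈ U ∧
      (∀ y ∈ U, (y ∈ Ω ↔ f (WithLp.toLp 2 (fun i => e y (Fin.castSucc i))) < e y (Fin.last d)) ∧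
        (y ∈ frontier Ω ↔ e y (Fin.last d) = f (WithLp.toLp 2 (fun i => e y (Fin.castSucc i)))))

/-- Bounded domain of class `C^{k,1}`: as `IsLipschitzDomain`, with the local graph
functions of class `C^k` with Lipschitz `k`-th derivative. -/
def IsCkLipDomain {d : ℕ} (k : ℕ) (Ω : Set (Euc (d + 1))) : Prop :=
  Bornology.IsBounded Ω ∧ IsOpen Ω ∧ IsConnected Ω ∧
  ∀ x ∈ frontier Ω, ∃ (e : Euc (d + 1) ≃ᵢ Euc (d + 1)) (f : Euc d → ℝ) (K : NNReal)
      (U : Set (Euc (d + 1))), (ContDiff ℝ k f ∧ LipschitzWith K (iteratedFDeriv ℝ k f)) ∧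
      IsOpen U ∧ x ∈ U ∧
      (∀ y ∈ U, (y ∈ Ω ↔ f (WithLp.toLp 2 (fun i => e y (Fin.castSucc i))) < e y (Fin.last d)) ∧
        (y ∈ frontier Ω ↔ e y (Fin.last d) = f (WithLp.toLp 2 (fun i => e y (Fin.castSucc i)))))

/-- `v` coincides with (the evaluation of) a polynomial of total degree `≤ m`. -/
def IsPolyDeg {d : ℕ} (m : ℕ) (v : Euc d → ℂ) : Prop :=
  ∃ P : MvPolynomial (Fin d) ℂ, P.totalDegree ≤ m ∧
    ∀ x : Euc d, v x = MvPolynomial.eval (fun i => (x i : ℂ)) P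

/-- The embedding `x' ↦ (x',0)` of `ℝ^d` as the boundary of the half-space `ℝ^{d+1}_+`. -/
def ext0 {d : ℕ} (x' : Euc d) : Euc (d + 1) :=
  WithLp.toLp 2 (fun j => Fin.snoc (α := fun _ => ℝ) x' (0 : ℝ) j)

/-- The upper half-space `ℝ^{d+1}_+`. -/
def halfSpace (d : ℕ) : Set (Euc (d + 1)) := {x | 0 < x (Fin.last d)}

/-- A trace operator for `W^{1,p}(Ω)`: additive, homogeneous, bounded into `L^p(∂Ω)`,
and restricting smooth functions to their boundary values. -/
structure IsTraceOp {d : ℕ} (p : ℝ) (Ω : Set (Euc (d + 1)))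
    (T : (Euc (d + 1) → ℂ) → Euc (d + 1) → ℂ) : Prop where
  add : ∀ u v, T (fun x => u x + v x) = fun x => T u x + T v x
  smul : ∀ (c : ℂ) u, T (fun x => c * u x) = fun x => c * T u x
  bounded : ∃ Cb : ℝ, ∀ u D, MemSobolev 1 p Ω u D →
    bdryLpNorm p Ω (T u) ≤ Cb * sobNorm 1 p Ω D
  smooth_eq : ∀ u : Euc (d + 1) → ℂ, ContDiff ℝ (⊤ : ℕ∞) u → ∀ x ∈ frontier Ω, T u x = u x

/-- `ν` is (a.e. on `∂Ω`) the outward unit normal field of `Ω`. -/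
def IsOuterNormal {d : ℕ} (Ω : Set (Euc (d + 1))) (ν : Euc (d + 1) → Euc (d + 1)) : Prop :=
  ∀ᵐ x ∂((μH[(d : ℝ)] : Measure (Euc (d + 1))).restrict (frontier Ω)),
    ‖ν x‖ = 1 ∧ ∀ᶠ t in nhdsWithin 0 (Set.Ioi (0 : ℝ)),
      x + t • ν x ∉ closure Ω ∧ x - t • ν x ∈ Ω


def extT {d : ℕ} (x' : Euc d) (t : ℝ) : Euc (d + 1) :=
  WithLp.toLp 2 (fun j => Fin.snoc (α := fun _ => ℝ) x' t j)

lemma extT_zero {d : ℕ} (x' : Euc d) : extT x' 0 = ext0 x' := rfl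

lemma extT_eq {d : ℕ} (x' : Euc d) (t : ℝ) :
    extT x' t = ext0 x' + t • EuclideanSpace.single (Fin.last d) (1:ℝ) := by
  ext j
  induction j using Fin.lastCases with
  | last => simp [extT, ext0, EuclideanSpace.single_apply]
  | cast i => simp [extT, ext0, EuclideanSpace.single_apply, (Fin.castSucc_lt_last i).ne]

lemma norm_extT {d : ℕ} (x' : Euc d) (t : ℝ) :
    ‖extT x' t‖ = Real.sqrt (‖x'‖^2 + t^2) := by
  rw [EuclideanSpace.norm_eq, EuclideanSpace.norm_eq]
  congr 1
  rw [Real.sq_sqrt (by positivity)]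
  rw [Fin.sum_univ_castSucc]
  simp [extT]

lemma abs_le_norm_extT {d : ℕ} (x' : Euc d) (t : ℝ) : |t| ≤ ‖extT x' t‖ := by
  rw [norm_extT]
  rw [← Real.sqrt_sq_eq_abs]
  exact Real.sqrt_le_sqrt (le_add_of_nonneg_left (sq_nonneg _))

lemma norm_le_norm_extT {d : ℕ} (x' : Euc d) (t : ℝ) : ‖x'‖ ≤ ‖extT x' t‖ := by
  rw [norm_extT]
  calc ‖x'‖ = Real.sqrt (‖x'‖^2) := (Real.sqrt_sq (norm_nonneg _)).symm
    _ ≤ _ := Real.sqrt_le_sqrt (le_add_of_nonneg_right (sq_nonneg t))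

lemma continuous_ext0 {d : ℕ} : Continuous (fun x' : Euc d => ext0 x') := by
  have hsnoc : Continuous (fun y : Fin d → ℝ => (Fin.snoc (α := fun _ => ℝ) y 0 : Fin (d+1) → ℝ)) := by
    refine continuous_pi fun j => ?_
    induction j using Fin.lastCases with
    | last => simpa [Fin.snoc_last] using continuous_const
    | cast i => simpa [Fin.snoc_castSucc] using continuous_apply i
  have heq : (fun x' : Euc d => ext0 x') =
      (WithLp.equiv 2 (Fin (d+1) → ℝ)).symm ∘
        (fun y : Fin d → ℝ => (Fin.snoc (α := fun _ => ℝ) y 0 : Fin (d+1) → ℝ)) ∘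
        (WithLp.equiv 2 (Fin d → ℝ)) := rfl
  rw [heq]
  exact (PiLp.continuous_toLp _ _).comp (hsnoc.comp (PiLp.continuous_ofLp _ _))

lemma continuous_extT2 {d : ℕ} : Continuous (fun q : Euc d × ℝ => extT q.1 q.2) := by
  have : (fun q : Euc d × ℝ => extT q.1 q.2) =
      fun q => ext0 q.1 + q.2 • EuclideanSpace.single (Fin.last d) (1:ℝ) := by
    funext q; exact extT_eq q.1 q.2
  rw [this]
  have hc := continuous_ext0 (d := d)
  fun_prop

lemma ptwise {d : ℕ} {p ε R : ℝ} (hp : 1 ≤ p) (hε : 0 < ε) (hR : 0 < R)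
    {u : Euc (d+1) → ℂ} (hu : ContDiff ℝ 1 u)
    (hsupp : tsupport u ⊆ Metric.closedBall 0 R) (x' : Euc d) :
    ‖u (ext0 x')‖ ^ p ≤ ε ^ p +
      ∫ t in Set.Ioi (0:ℝ),
        p * (‖u (extT x' t)‖ + ε) ^ (p-1) * ‖pder (Fin.last d) u (extT x' t)‖ := by
  have hp0 : 0 < p := lt_of_lt_of_le one_pos hp
  set e : Euc (d+1) := EuclideanSpace.single (Fin.last d) (1:ℝ) with he
  set c : Euc (d+1) := ext0 x' with hc
  set w : ℝ → ℂ := fun t => u (extT x' t) with hw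
  set w' : ℝ → ℂ := fun t => pder (Fin.last d) u (extT x' t) with hw'
  have hud : Differentiable ℝ u := hu.differentiable one_ne_zero
  have hwd : ∀ t, HasDerivAt w (w' t) t := by
    intro t
    have hL : HasDerivAt (fun s : ℝ => c + s • e) e t := by
      simpa using ((hasDerivAt_id t).smul_const e).const_add c
    have hpt : extT x' t = c + t • e := extT_eq x' t
    have h2 := ((hud (c + t • e)).hasFDerivAt).comp_hasDerivAt t hL
    have h4 : (u ∘ fun s : ℝ => c + s • e) = w := by
      funext s; rw [hw]; simp only [Function.comp]; rw [extT_eq]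
    rw [h4] at h2
    show HasDerivAt w (fderiv ℝ u (extT x' t) e) t
    rw [hpt]
    exact h2
  set q : ℝ → ℝ := fun t => (w t).re^2 + (w t).im^2 with hq
  set q' : ℝ → ℝ := fun t => 2*((w t).re*(w' t).re + (w t).im*(w' t).im) with hq'
  have hqd : ∀ t, HasDerivAt q (q' t) t := by
    intro t
    have hre : HasDerivAt (fun s => (w s).re) ((w' t).re) t :=
      (Complex.reCLM.hasFDerivAt.comp_hasDerivAt t (hwd t))
    have him : HasDerivAt (fun s => (w s).im) ((w' t).im) t :=
      (Complex.imCLM.hasFDerivAt.comp_hasDerivAt t (hwd t))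
    have := (hre.pow 2).add (him.pow 2)
    exact this.congr_deriv (by simp only [hq']; ring)
  have hqpos : ∀ t, 0 < q t + ε^2 := fun t => by positivity
  have hnw : ∀ t, ‖w t‖^2 = q t := by
    intro t
    rw [Complex.sq_norm, Complex.normSq_apply, hq]
    ring
  set g : ℝ → ℝ := fun t => (q t + ε^2) ^ (p/2) with hg
  set g' : ℝ → ℝ := fun t => (p/2) * (q t + ε^2)^(p/2 - 1) * q' t with hg'
  have hgd : ∀ t, HasDerivAt g (g' t) t := by
    intro t
    have h1 : HasDerivAt (fun s => q s + ε^2) (q' t) t := (hqd t).add_const _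
    have h2 := Real.hasDerivAt_rpow_const (x := q t + ε^2) (p := p/2)
      (Or.inl (hqpos t).ne')
    have := h2.comp t h1
    exact this
  -- key pointwise bound on |g'|
  have hb : ∀ t, |g' t| ≤ p * (‖w t‖ + ε) ^ (p-1) * ‖w' t‖ := by
    intro t
    have hcs : |(w t).re*(w' t).re + (w t).im*(w' t).im| ≤ ‖w t‖ * ‖w' t‖ := by
      have e1 : ‖w t‖^2 = (w t).re^2 + (w t).im^2 := by
        rw [Complex.sq_norm, Complex.normSq_apply]; ring
      have e2 : ‖w' t‖^2 = (w' t).re^2 + (w' t).im^2 := by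
        rw [Complex.sq_norm, Complex.normSq_apply]; ring
      have hsq : ((w t).re*(w' t).re + (w t).im*(w' t).im)^2 ≤ (‖w t‖ * ‖w' t‖)^2 := by
        nlinarith [sq_nonneg ((w t).re*(w' t).im - (w t).im*(w' t).re)]
      calc |(w t).re*(w' t).re + (w t).im*(w' t).im|
          = Real.sqrt (((w t).re*(w' t).re + (w t).im*(w' t).im)^2) :=
            (Real.sqrt_sq_eq_abs _).symm
        _ ≤ Real.sqrt ((‖w t‖ * ‖w' t‖)^2) := Real.sqrt_le_sqrt hsq
        _ = ‖w t‖ * ‖w' t‖ := Real.sqrt_sq (by positivity)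
    have h1 : |q' t| ≤ 2 * (‖w t‖ * ‖w' t‖) := by
      rw [hq', abs_mul, abs_two]
      exact mul_le_mul_of_nonneg_left hcs (by norm_num)
    have hrpos : 0 < (q t + ε^2)^(p/2 - 1) := Real.rpow_pos_of_pos (hqpos t) _
    have hwle : ‖w t‖ ≤ (q t + ε^2) ^ ((1:ℝ)/2) := by
      have : ‖w t‖ = (‖w t‖^2) ^ ((1:ℝ)/2) := by
        rw [← Real.rpow_natCast (‖w t‖) 2, ← Real.rpow_mul (norm_nonneg _)]
        norm_num
      rw [this]
      exact Real.rpow_le_rpow (by positivity) (by rw [hnw]; nlinarith [sq_nonneg ε])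
        (by norm_num)
    calc |g' t| = (p/2) * (q t + ε^2)^(p/2 - 1) * |q' t| := by
          rw [hg', abs_mul, abs_mul, abs_of_nonneg (by positivity : (0:ℝ) ≤ p/2),
            abs_of_nonneg hrpos.le]
      _ ≤ (p/2) * (q t + ε^2)^(p/2 - 1) * (2 * (‖w t‖ * ‖w' t‖)) := by
          apply mul_le_mul_of_nonneg_left h1 (by positivity)
      _ ≤ (p/2) * (q t + ε^2)^(p/2 - 1) * (2 * ((q t + ε^2) ^ ((1:ℝ)/2) * ‖w' t‖)) := by
          apply mul_le_mul_of_nonneg_left _ (by positivity)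
          apply mul_le_mul_of_nonneg_left _ (by norm_num)
          exact mul_le_mul_of_nonneg_right hwle (norm_nonneg _)
      _ = p * (q t + ε^2) ^ ((p-1)/2) * ‖w' t‖ := by
          rw [show ((p-1)/2 : ℝ) = (p/2 - 1) + 1/2 from by ring, Real.rpow_add (hqpos t)]
          ring
      _ ≤ p * (‖w t‖ + ε) ^ (p-1) * ‖w' t‖ := by
          apply mul_le_mul_of_nonneg_right _ (norm_nonneg _)
          apply mul_le_mul_of_nonneg_left _ hp0.le
          have hbase : q t + ε^2 ≤ (‖w t‖ + ε)^2 := by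
            rw [← hnw]; nlinarith [norm_nonneg (w t), hε.le]
          calc (q t + ε^2) ^ ((p-1)/2) ≤ ((‖w t‖ + ε)^2) ^ ((p-1)/2) :=
                Real.rpow_le_rpow (hqpos t).le hbase (by linarith)
            _ = (‖w t‖ + ε) ^ (p-1) := by
                rw [← Real.rpow_natCast (‖w t‖ + ε) 2, ← Real.rpow_mul (by positivity)]
                congr 1
                push_cast
                ring
  -- vanishing beyond the support
  have hzero : ∀ t : ℝ, R < |t| → w t = 0 ∧ w' t = 0 := by
    intro t ht
    have hx : extT x' t ∉ tsupport u := by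
      intro hmem
      have := hsupp hmem
      rw [Metric.mem_closedBall, dist_zero_right] at this
      exact absurd (le_trans (abs_le_norm_extT x' t) this) (not_le.mpr ht)
    constructor
    · show u (extT x' t) = 0
      exact image_eq_zero_of_notMem_tsupport hx
    · have hfz : fderiv ℝ u (extT x' t) = 0 :=
        Function.notMem_support.mp
          (fun hmem => hx ((support_fderiv_subset (𝕜 := ℝ) (f := u)) hmem))
      rw [hw']
      show fderiv ℝ u (extT x' t) (EuclideanSpace.single (Fin.last d) (1:ℝ)) = 0
      rw [hfz]
      rfl
  -- continuity facts
  have hline : Continuous (fun t : ℝ => extT x' t) :=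
    continuous_extT2.comp (continuous_const.prodMk continuous_id)
  have hcw : Continuous w := hu.continuous.comp hline
  have hcpder : Continuous (pder (Fin.last d) u) :=
    (hu.continuous_fderiv one_ne_zero).clm_apply continuous_const
  have hcw' : Continuous w' := hcpder.comp hline
  have hcq : Continuous q := by
    apply Continuous.add
    · exact (Complex.continuous_re.comp hcw).pow 2
    · exact (Complex.continuous_im.comp hcw).pow 2
  have hcq' : Continuous q' := by
    apply Continuous.mul continuous_const
    exact ((Complex.continuous_re.comp hcw).mul (Complex.continuous_re.comp hcw')).add
      ((Complex.continuous_im.comp hcw).mul (Complex.continuous_im.comp hcw'))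
  have hcg' : Continuous g' := by
    apply Continuous.mul _ hcq'
    apply Continuous.mul continuous_const
    rw [continuous_iff_continuousAt]
    intro t
    exact ((hcq.continuousAt).add continuousAt_const).rpow_const (Or.inl (hqpos t).ne')
  set h : ℝ → ℝ := fun t => p * (‖w t‖ + ε) ^ (p-1) * ‖w' t‖ with hhdef
  have hch : Continuous h := by
    apply Continuous.mul _ hcw'.norm
    apply Continuous.mul continuous_const
    rw [continuous_iff_continuousAt]
    intro t
    exact ((hcw.norm.continuousAt).add continuousAt_const).rpow_const
      (Or.inl (add_pos_of_nonneg_of_pos (norm_nonneg _) hε).ne')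
  have hhnn : ∀ t, 0 ≤ h t := by
    intro t
    have : (0:ℝ) < ‖w t‖ + ε := by positivity
    positivity
  set S : ℝ := R + 1 with hS
  have hS0 : (0:ℝ) ≤ S := by linarith
  have hhcs : HasCompactSupport h := by
    apply HasCompactSupport.intro (isCompact_Icc (a := -S) (b := S))
    intro t ht
    have htR : R < |t| := by
      simp only [Set.mem_Icc, not_and_or, not_le] at ht
      rcases ht with ht | ht
      · rw [abs_of_nonpos (by linarith)]; linarith
      · rw [abs_of_nonneg (by linarith)]; linarith
    rw [hhdef]
    simp [(hzero t htR).2]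
  have hInt : IntegrableOn h (Set.Ioi (0:ℝ)) volume :=
    (hch.integrable_of_hasCompactSupport hhcs).integrableOn
  have hFTC : ∫ t in (0:ℝ)..S, g' t = g S - g 0 :=
    intervalIntegral.integral_eq_sub_of_hasDerivAt (fun t _ => hgd t)
      (hcg'.intervalIntegrable 0 S)
  have h2 : g 0 ≤ g S + ∫ t in (0:ℝ)..S, h t := by
    have hmono : ∫ t in (0:ℝ)..S, -g' t ≤ ∫ t in (0:ℝ)..S, h t := by
      apply intervalIntegral.integral_mono_on hS0
        (hcg'.neg.intervalIntegrable 0 S) (hch.intervalIntegrable 0 S)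
      intro t _
      exact le_trans (neg_le_abs _) (hb t)
    rw [intervalIntegral.integral_neg, hFTC] at hmono
    linarith
  have h3 : ∫ t in (0:ℝ)..S, h t ≤ ∫ t in Set.Ioi (0:ℝ), h t := by
    rw [intervalIntegral.integral_of_le hS0]
    apply setIntegral_mono_set hInt
    · exact Filter.Eventually.of_forall hhnn
    · exact Set.Ioc_subset_Ioi_self.eventuallyLE
  have hwS : w S = 0 := (hzero S (by rw [abs_of_nonneg hS0]; linarith)).1
  have hgS : g S = ε ^ p := by
    have hqS : q S = 0 := by rw [hq]; simp [hwS]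
    rw [hg]
    simp only [hqS]
    rw [zero_add, ← Real.rpow_natCast ε 2, ← Real.rpow_mul hε.le]
    congr 1
    push_cast
    ring
  have hg0 : ‖u (ext0 x')‖ ^ p ≤ g 0 := by
    have hwu : ‖u (ext0 x')‖ = ‖w 0‖ := by
      show ‖u (ext0 x')‖ = ‖u (extT x' 0)‖
      rw [extT_zero]
    rw [hwu]
    have e1 : ‖w 0‖ ^ p = (‖w 0‖^2) ^ (p/2) := by
      rw [← Real.rpow_natCast (‖w 0‖) 2, ← Real.rpow_mul (norm_nonneg _)]
      congr 1
      push_cast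
      ring
    rw [e1, hg]
    apply Real.rpow_le_rpow (by positivity) _ (by positivity)
    rw [hnw 0]
    nlinarith [sq_nonneg ε]
  calc ‖u (ext0 x')‖ ^ p ≤ g 0 := hg0
    _ ≤ g S + ∫ t in (0:ℝ)..S, h t := h2
    _ ≤ ε ^ p + ∫ t in Set.Ioi (0:ℝ), h t := by rw [hgS]; linarith
    _ = ε ^ p + ∫ t in Set.Ioi (0:ℝ),
        p * (‖u (extT x' t)‖ + ε) ^ (p-1) * ‖pder (Fin.last d) u (extT x' t)‖ := rfl

lemma fubini_half {d : ℕ} (F : Euc (d+1) → ℝ) (hF : Continuous F) (hs : HasCompactSupport F) :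
    (∫ x in halfSpace d, F x) = (∫ x' : Euc d, ∫ t in Set.Ioi (0:ℝ), F (extT x' t)) ∧
    Integrable (fun x' : Euc d => ∫ t in Set.Ioi (0:ℝ), F (extT x' t)) := by
  have hm1 := (EuclideanSpace.volume_preserving_symm_measurableEquiv_toLp (Fin (d+1))).symm
  set e3 := MeasurableEquiv.piFinSuccAbove (fun _ : Fin (d+1) => ℝ) (Fin.last d) with he3
  have hm3 := (MeasureTheory.volume_preserving_piFinSuccAbove (fun _ : Fin (d+1) => ℝ) (Fin.last d)).symm
  -- step 1
  have h1 : (∫ x in halfSpace d, F x) =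
      ∫ y in {y : Fin (d+1) → ℝ | 0 < y (Fin.last d)}, F ((MeasurableEquiv.toLp 2 (Fin (d+1) → ℝ)).symm.symm y) := by
    rw [← hm1.setIntegral_preimage_emb (MeasurableEquiv.measurableEmbedding _) F (halfSpace d)]
    rfl
  -- the function on the product space
  set G : ℝ × (Fin d → ℝ) → ℝ := fun tz => F (extT (WithLp.toLp 2 tz.2) tz.1) with hG
  have hcomp : ∀ tz : ℝ × (Fin d → ℝ),
      F ((MeasurableEquiv.toLp 2 (Fin (d+1) → ℝ)).symm.symm (e3.symm tz)) = G tz := by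
    intro tz
    congr 1
    show WithLp.toLp 2 ((Fin.insertNthEquiv (fun _ : Fin (d+1) => ℝ) (Fin.last d)) (tz.1, tz.2) : Fin (d+1) → ℝ)
      = extT (WithLp.toLp 2 tz.2) tz.1
    simp only [Fin.insertNthEquiv, Equiv.coe_fn_mk, Fin.insertNth_last']
    rfl
  have hpre : e3.symm ⁻¹' {y : Fin (d+1) → ℝ | 0 < y (Fin.last d)} =
      Set.Ioi (0:ℝ) ×ˢ (Set.univ : Set (Fin d → ℝ)) := by
    ext tz
    simp [e3, MeasurableEquiv.piFinSuccAbove, Fin.insertNthEquiv, Set.mem_prod]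
  have h2 : (∫ y in {y : Fin (d+1) → ℝ | 0 < y (Fin.last d)},
        F ((MeasurableEquiv.toLp 2 (Fin (d+1) → ℝ)).symm.symm y)) =
      ∫ tz in Set.Ioi (0:ℝ) ×ˢ (Set.univ : Set (Fin d → ℝ)), G tz := by
    rw [← hm3.setIntegral_preimage_emb (MeasurableEquiv.measurableEmbedding _) _
      {y : Fin (d+1) → ℝ | 0 < y (Fin.last d)}, hpre]
    exact setIntegral_congr_fun (by measurability) (fun tz _ => hcomp tz)
  -- integrability on product
  have hFint : Integrable F := hF.integrable_of_hasCompactSupport hs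
  have hm13 : MeasurePreserving
      ((⇑(MeasurableEquiv.toLp 2 (Fin (d+1) → ℝ)).symm.symm) ∘ ⇑e3.symm) volume volume :=
    hm1.comp hm3
  have hemb13 : MeasurableEmbedding
      ((⇑(MeasurableEquiv.toLp 2 (Fin (d+1) → ℝ)).symm.symm) ∘ ⇑e3.symm) :=
    (MeasurableEquiv.measurableEmbedding _).comp (MeasurableEquiv.measurableEmbedding _)
  have hGint : Integrable G volume := by
    have := (hm13.integrable_comp_emb hemb13 (g := F)).2 hFint
    have heq : F ∘ ((⇑(MeasurableEquiv.toLp 2 (Fin (d+1) → ℝ)).symm.symm) ∘ ⇑e3.symm) = G := by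
      funext tz; exact hcomp tz
    rwa [heq] at this
  have hGint' : Integrable G ((volume.restrict (Set.Ioi (0:ℝ))).prod volume) := by
    have hpr : (volume.restrict (Set.Ioi (0:ℝ))).prod (volume : Measure (Fin d → ℝ)) =
        (Measure.prod volume volume).restrict (Set.Ioi (0:ℝ) ×ˢ Set.univ) := by
      rw [← Measure.prod_restrict, Measure.restrict_univ]
    rw [hpr, ← Measure.volume_eq_prod]
    exact hGint.restrict
  -- Fubini
  have h3 : (∫ tz in Set.Ioi (0:ℝ) ×ˢ (Set.univ : Set (Fin d → ℝ)), G tz) =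
      ∫ z : Fin d → ℝ, ∫ t in Set.Ioi (0:ℝ), G (t, z) := by
    have hpr : (volume.restrict (Set.Ioi (0:ℝ))).prod (volume : Measure (Fin d → ℝ)) =
        (Measure.prod volume volume).restrict (Set.Ioi (0:ℝ) ×ˢ Set.univ) := by
      rw [← Measure.prod_restrict, Measure.restrict_univ]
    rw [Measure.volume_eq_prod, ← hpr]
    exact MeasureTheory.integral_prod_symm G hGint'
  have hmarg : Integrable (fun z : Fin d → ℝ => ∫ t in Set.Ioi (0:ℝ), G (t, z)) volume :=
    hGint'.integral_prod_right
  -- transfer to Euc d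
  have hm2 := (EuclideanSpace.volume_preserving_symm_measurableEquiv_toLp (Fin d)).symm
  have hemb2 := MeasurableEquiv.measurableEmbedding (MeasurableEquiv.toLp 2 (Fin d → ℝ)).symm.symm
  have h4 : (∫ z : Fin d → ℝ, ∫ t in Set.Ioi (0:ℝ), G (t, z)) =
      ∫ x' : Euc d, ∫ t in Set.Ioi (0:ℝ), F (extT x' t) := by
    rw [← hm2.integral_comp hemb2 (fun x' : Euc d => ∫ t in Set.Ioi (0:ℝ), F (extT x' t))]
    rfl
  constructor
  · rw [h1, h2, h3, h4]
  · have := (hm2.integrable_comp_emb hemb2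
      (g := fun x' : Euc d => ∫ t in Set.Ioi (0:ℝ), F (extT x' t))).1
    apply this
    exact hmarg

lemma core {d : ℕ} {p : ℝ} (hp : 1 ≤ p) {u : Euc (d+1) → ℂ}
    (hu : ContDiff ℝ 1 u) (hsupp : HasCompactSupport u) :
    (∫ x' : Euc d, ‖u (ext0 x')‖ ^ p) ≤
      p * ∫ x in halfSpace d, ‖u x‖ ^ (p-1) * ‖pder (Fin.last d) u x‖ := by
  have hp0 : 0 < p := lt_of_lt_of_le one_pos hp
  obtain ⟨R, hR0, hRs⟩ : ∃ R, 0 < R ∧ tsupport u ⊆ Metric.closedBall 0 R :=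
    ((hsupp.isBounded).subset_closedBall_lt 0 0).imp fun R h => ⟨h.1, h.2⟩
  have hcpder : Continuous (pder (Fin.last d) u) :=
    (hu.continuous_fderiv one_ne_zero).clm_apply continuous_const
  have hpcs : HasCompactSupport (pder (Fin.last d) u) := by
    apply HasCompactSupport.intro hsupp
    intro x hx
    have hfz : fderiv ℝ u x = 0 :=
      Function.notMem_support.mp
        (fun hmem => hx ((support_fderiv_subset (𝕜 := ℝ) (f := u)) hmem))
    show fderiv ℝ u x (EuclideanSpace.single (Fin.last d) (1:ℝ)) = 0
    rw [hfz]; rfl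
  -- the boundary-value function
  set A : Euc d → ℝ := fun x' => ‖u (ext0 x')‖ ^ p with hA
  have hAzero : ∀ x' : Euc d, x' ∉ Metric.closedBall (0 : Euc d) R → A x' = 0 := by
    intro x' hx
    rw [Metric.mem_closedBall, dist_zero_right, not_le] at hx
    have : ext0 x' ∉ tsupport u := by
      intro hmem
      have := hRs hmem
      rw [Metric.mem_closedBall, dist_zero_right] at this
      have h2 := norm_le_norm_extT x' 0
      rw [extT_zero] at h2
      linarith
    rw [hA]
    simp only [image_eq_zero_of_notMem_tsupport this, norm_zero]
    exact Real.zero_rpow hp0.ne'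
  have hAc : Continuous A := by
    rw [continuous_iff_continuousAt]
    intro x'
    exact ((hu.continuous.comp continuous_ext0).norm.continuousAt).rpow_const
      (Or.inr hp0.le)
  have hAcs : HasCompactSupport A :=
    HasCompactSupport.intro (isCompact_closedBall _ _) hAzero
  have hAint : Integrable A := hAc.integrable_of_hasCompactSupport hAcs
  -- the ε-family of majorants on the half-space
  set F : ℝ → Euc (d+1) → ℝ :=
    fun ε x => p * (‖u x‖ + ε) ^ (p-1) * ‖pder (Fin.last d) u x‖ with hF
  have hFc : ∀ ε : ℝ, 0 < ε → Continuous (F ε) := by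
    intro ε hε
    apply Continuous.mul _ hcpder.norm
    apply Continuous.mul continuous_const
    rw [continuous_iff_continuousAt]
    intro x
    exact ((hu.continuous.norm.continuousAt).add continuousAt_const).rpow_const
      (Or.inl (add_pos_of_nonneg_of_pos (norm_nonneg _) hε).ne')
  have hFcs : ∀ ε : ℝ, HasCompactSupport (F ε) := by
    intro ε
    apply HasCompactSupport.intro hpcs
    intro x hx
    rw [hF]
    simp [image_eq_zero_of_notMem_tsupport hx]
  set V : ℝ := (volume (Metric.closedBall (0 : Euc d) R)).toReal with hV
  have hV0 : 0 ≤ V := ENNReal.toReal_nonneg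
  -- the key ε-uniform bound
  have key : ∀ ε : ℝ, 0 < ε →
      (∫ x' : Euc d, A x') ≤ ε ^ p * V + ∫ x in halfSpace d, F ε x := by
    intro ε hε
    have hfub := fubini_half (F ε) (hFc ε hε) (hFcs ε)
    set B : Euc d → ℝ := fun x' => ∫ t in Set.Ioi (0:ℝ), F ε (extT x' t) with hB
    have hBnn : ∀ x', 0 ≤ B x' := by
      intro x'
      apply setIntegral_nonneg measurableSet_Ioi
      intro t _
      rw [hF]
      exact mul_nonneg (mul_nonneg hp0.le (Real.rpow_nonneg (by positivity) _))
        (norm_nonneg _)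
    have hptw : ∀ x' : Euc d,
        A x' ≤ (Metric.closedBall (0 : Euc d) R).indicator (fun _ => ε ^ p) x' + B x' := by
      intro x'
      by_cases hx : x' ∈ Metric.closedBall (0 : Euc d) R
      · rw [Set.indicator_of_mem hx]
        exact ptwise hp hε hR0 hu hRs x'
      · rw [Set.indicator_of_notMem hx, hAzero x' hx, zero_add]
        exact hBnn x'
    have hind : Integrable ((Metric.closedBall (0 : Euc d) R).indicator
        (fun _ => ε ^ p) : Euc d → ℝ) := by
      rw [integrable_indicator_iff measurableSet_closedBall]
      exact integrableOn_const (measure_closedBall_lt_top).ne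
    calc (∫ x' : Euc d, A x')
        ≤ ∫ x' : Euc d, ((Metric.closedBall (0 : Euc d) R).indicator (fun _ => ε ^ p) x'
            + B x') := integral_mono hAint (hind.add hfub.2) hptw
      _ = ε ^ p * V + ∫ x' : Euc d, B x' := by
          rw [integral_add hind hfub.2, integral_indicator_const _ measurableSet_closedBall]
          rw [smul_eq_mul, mul_comm]
          rfl
      _ = ε ^ p * V + ∫ x in halfSpace d, F ε x := by rw [hfub.1]
  -- limit ε → 0⁺
  set F0 : Euc (d+1) → ℝ := fun x => p * ‖u x‖ ^ (p-1) * ‖pder (Fin.last d) u x‖ with hF0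
  have t1 : Filter.Tendsto (fun ε : ℝ => ε ^ p * V) (nhdsWithin 0 (Set.Ioi 0)) (nhds 0) := by
    have h1 : ContinuousAt (fun ε : ℝ => ε ^ p) 0 :=
      Real.continuousAt_rpow_const 0 p (Or.inr hp0.le)
    have h2 : Filter.Tendsto (fun ε : ℝ => ε ^ p * V) (nhdsWithin 0 (Set.Ioi 0))
        (nhds ((0:ℝ) ^ p * V)) :=
      (h1.tendsto.mono_left (nhdsWithin_le_nhds (s := Set.Ioi 0))).mul_const V
    rw [Real.zero_rpow hp0.ne', zero_mul] at h2
    exact h2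
  have t2 : Filter.Tendsto (fun ε : ℝ => ∫ x in halfSpace d, F ε x)
      (nhdsWithin 0 (Set.Ioi 0)) (nhds (∫ x in halfSpace d, F0 x)) := by
    set bound : Euc (d+1) → ℝ :=
      fun x => p * (‖u x‖ + 1) ^ (p-1) * ‖pder (Fin.last d) u x‖ with hbd
    apply tendsto_integral_filter_of_dominated_convergence bound
    · apply Filter.eventually_of_mem self_mem_nhdsWithin
      intro ε hε
      exact ((hFc ε hε).aestronglyMeasurable).restrict
    · apply Filter.eventually_of_mem (Ioc_mem_nhdsGT_of_mem ⟨le_refl (0:ℝ), one_pos⟩)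
      intro ε hε
      apply Filter.Eventually.of_forall
      intro x
      have h1 : (0:ℝ) < ‖u x‖ + ε := add_pos_of_nonneg_of_pos (norm_nonneg _) hε.1
      have h2 : F ε x ≤ bound x := by
        rw [hF, hbd]
        apply mul_le_mul_of_nonneg_right _ (norm_nonneg _)
        apply mul_le_mul_of_nonneg_left _ hp0.le
        exact Real.rpow_le_rpow h1.le (by linarith [hε.2]) (by linarith)
      rw [Real.norm_of_nonneg (by rw [hF]; positivity)]
      exact h2
    · exact ((hFc 1 one_pos).integrable_of_hasCompactSupport (hFcs 1)).restrict
    · apply Filter.Eventually.of_forall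
      intro x
      rcases eq_or_lt_of_le hp with hp1 | hp1
      · have : ∀ ε : ℝ, F ε x = F0 x := by
          intro ε
          rw [hF, hF0, ← hp1]
          norm_num
        simp only [this]
        exact tendsto_const_nhds
      · have hb : Filter.Tendsto (fun ε : ℝ => ‖u x‖ + ε)
            (nhdsWithin 0 (Set.Ioi 0)) (nhds (‖u x‖)) := by
          have h0 : Filter.Tendsto (fun ε : ℝ => ‖u x‖ + ε) (nhds 0) (nhds (‖u x‖ + 0)) :=
            (continuous_const.add continuous_id).tendsto (0:ℝ)
          rw [add_zero] at h0
          exact h0.mono_left nhdsWithin_le_nhds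
        have hr : ContinuousAt (fun s : ℝ => s ^ (p-1)) (‖u x‖) :=
          Real.continuousAt_rpow_const _ _ (Or.inr (by linarith))
        have := ((hr.tendsto.comp hb).const_mul p).mul_const ‖pder (Fin.last d) u x‖
        exact this
  have hlim := t1.add t2
  rw [zero_add] at hlim
  have hfinal : (∫ x' : Euc d, A x') ≤ ∫ x in halfSpace d, F0 x := by
    apply ge_of_tendsto hlim
    apply Filter.eventually_of_mem self_mem_nhdsWithin
    intro ε hε
    exact key ε hε
  calc (∫ x' : Euc d, A x') ≤ ∫ x in halfSpace d, F0 x := hfinal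
    _ = p * ∫ x in halfSpace d, ‖u x‖ ^ (p-1) * ‖pder (Fin.last d) u x‖ := by
        rw [← integral_const_mul]
        congr 1
        funext x
        rw [hF0]
        ring

lemma mder_single {d : ℕ} (u : Euc (d+1) → ℂ) :
    mder (fun i => if i = Fin.last d then 1 else 0) u = pder (Fin.last d) u := by
  have hgen : ∀ (l : List (Fin d)) (v : Euc (d+1) → ℂ),
      List.foldr (fun i g => (pder i)^[if i = Fin.last d then 1 else 0] g) v
        (l.map Fin.castSucc) = v := by
    intro l
    induction l with
    | nil => intro v; simp
    | cons a l ih =>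
        intro v
        simp only [List.map_cons, List.foldr_cons, ih, (Fin.castSucc_lt_last a).ne,
          if_false]
        rw [Function.iterate_zero]
        rfl
  unfold mder
  rw [List.finRange_succ_last, List.foldr_append]
  simp only [List.foldr_cons, List.foldr_nil, if_pos rfl, Function.iterate_one]
  exact hgen _ _

lemma holder_step {d : ℕ} {p : ℝ} (hp : 1 ≤ p) {u : Euc (d+1) → ℂ}
    (hu : ContDiff ℝ 1 u) (hsupp : HasCompactSupport u) :
    (∫ x in halfSpace d, ‖u x‖ ^ (p-1) * ‖pder (Fin.last d) u x‖) ≤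
      (∫ x in halfSpace d, ‖u x‖ ^ p) ^ ((p-1)/p) *
        (∫ x in halfSpace d, ‖pder (Fin.last d) u x‖ ^ p) ^ (1/p) := by
  have hcpder : Continuous (pder (Fin.last d) u) :=
    (hu.continuous_fderiv one_ne_zero).clm_apply continuous_const
  have hpcs : HasCompactSupport (pder (Fin.last d) u) := by
    apply HasCompactSupport.intro hsupp
    intro x hx
    have hfz : fderiv ℝ u x = 0 :=
      Function.notMem_support.mp
        (fun hmem => hx ((support_fderiv_subset (𝕜 := ℝ) (f := u)) hmem))
    show fderiv ℝ u x (EuclideanSpace.single (Fin.last d) (1:ℝ)) = 0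
    rw [hfz]; rfl
  rcases eq_or_lt_of_le hp with hp1 | hp1
  · subst hp1
    simp only [sub_self, Real.rpow_zero, one_mul, Real.rpow_one, zero_div,
      div_self (one_ne_zero : (1:ℝ) ≠ 0)]
    exact le_rfl
  · have hpm1 : 0 < p - 1 := by linarith
    have hq : Real.HolderConjugate (p/(p-1)) p := by
      constructor
      · rw [inv_div, inv_one]
        field_simp [show p ≠ 0 by linarith]
        ring
      · exact div_pos (by linarith) hpm1
      · linarith
    set f : Euc (d+1) → ℝ := fun x => ‖u x‖ ^ (p-1) with hf
    set g : Euc (d+1) → ℝ := fun x => ‖pder (Fin.last d) u x‖ with hgdef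
    have hfc : Continuous f := by
      rw [continuous_iff_continuousAt]
      intro x
      exact (hu.continuous.norm.continuousAt).rpow_const (Or.inr hpm1.le)
    have hfcs : HasCompactSupport f := by
      apply HasCompactSupport.intro hsupp
      intro x hx
      rw [hf]
      simp only [image_eq_zero_of_notMem_tsupport hx, norm_zero]
      exact Real.zero_rpow hpm1.ne'
    have hfm : MemLp f (ENNReal.ofReal (p/(p-1)))
        (volume.restrict (halfSpace d)) :=
      (hfc.memLp_of_hasCompactSupport hfcs).restrict _
    have hgm : MemLp g (ENNReal.ofReal p) (volume.restrict (halfSpace d)) :=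
      ((hcpder.norm.memLp_of_hasCompactSupport hpcs.norm).restrict _)
    have := integral_mul_le_Lp_mul_Lq_of_nonneg hq
      (Filter.Eventually.of_forall fun x => Real.rpow_nonneg (norm_nonneg _) _)
      (Filter.Eventually.of_forall fun x => norm_nonneg _) hfm hgm
    calc (∫ x in halfSpace d, ‖u x‖ ^ (p-1) * ‖pder (Fin.last d) u x‖)
        ≤ (∫ x in halfSpace d, f x ^ (p/(p-1))) ^ (1/(p/(p-1))) *
            (∫ x in halfSpace d, g x ^ p) ^ (1/p) := this
      _ = (∫ x in halfSpace d, ‖u x‖ ^ p) ^ ((p-1)/p) *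
            (∫ x in halfSpace d, ‖pder (Fin.last d) u x‖ ^ p) ^ (1/p) := by
          rw [one_div_div]
          have he : (∫ x in halfSpace d, f x ^ (p/(p-1))) =
              ∫ x in halfSpace d, ‖u x‖ ^ p := by
            apply integral_congr_ae
            apply Filter.Eventually.of_forall
            intro x
            rw [hf]
            show (‖u x‖ ^ (p-1)) ^ (p/(p-1)) = ‖u x‖ ^ p
            rw [← Real.rpow_mul (norm_nonneg _)]
            congr 1
            field_simp
          rw [he]

/-- Trace interpolation on the half-space: for `u ∈ C_c^1(closure ℝ^{d+1}_+)`,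
`∫_{ℝ^d}|u(x',0)|^p dx' ≤ p ‖u‖_{L^p}^{p-1} ‖∂_{x_d}u‖_{L^p}`, and consequently
`‖u(·,0)‖_{L^p} ≤ p^{1/p} ‖u‖_{L^p}^{(p-1)/p} ‖u‖_{W^{1,p}}^{1/p}`. -/
theorem statement8 {d : ℕ} (p : ℝ) (hp : 1 ≤ p)
    (u : Euc (d + 1) → ℂ) (hu : ContDiff ℝ 1 u) (hsupp : HasCompactSupport u) :
    (∫ x' : Euc d, ‖u (ext0 x')‖ ^ p) ≤
      p * lpNorm p (halfSpace d) u ^ (p - 1) *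
        (∫ x in halfSpace d, ‖pder (Fin.last d) u x‖ ^ p) ^ (1 / p) ∧
    (∫ x' : Euc d, ‖u (ext0 x')‖ ^ p) ^ (1 / p) ≤
      p ^ (1 / p) * lpNorm p (halfSpace d) u ^ ((p - 1) / p) *
        sobNorm 1 p (halfSpace d) (fun α => mder α u) ^ (1 / p) := by
  have hp0 : 0 < p := lt_of_lt_of_le one_pos hp
  set X : ℝ := ∫ x in halfSpace d, ‖u x‖ ^ p with hX
  have hX0 : 0 ≤ X :=
    integral_nonneg fun x => Real.rpow_nonneg (norm_nonneg _) _
  set Y : ℝ := ∫ x in halfSpace d, ‖pder (Fin.last d) u x‖ ^ p with hY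
  have hY0 : 0 ≤ Y :=
    integral_nonneg fun x => Real.rpow_nonneg (norm_nonneg _) _
  have hlpn0 : 0 ≤ lpNorm p (halfSpace d) u := Real.rpow_nonneg hX0 _
  have hlp : lpNorm p (halfSpace d) u ^ (p-1) = X ^ ((p-1)/p) := by
    rw [show lpNorm p (halfSpace d) u = X ^ (1/p) from rfl, ← Real.rpow_mul hX0]
    congr 1
    ring
  have part1 : (∫ x' : Euc d, ‖u (ext0 x')‖ ^ p) ≤
      p * lpNorm p (halfSpace d) u ^ (p - 1) * Y ^ (1 / p) := by
    calc (∫ x' : Euc d, ‖u (ext0 x')‖ ^ p)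
        ≤ p * ∫ x in halfSpace d, ‖u x‖ ^ (p-1) * ‖pder (Fin.last d) u x‖ :=
          core hp hu hsupp
      _ ≤ p * (X ^ ((p-1)/p) * Y ^ (1/p)) :=
          mul_le_mul_of_nonneg_left (holder_step hp hu hsupp) hp0.le
      _ = p * lpNorm p (halfSpace d) u ^ (p - 1) * Y ^ (1 / p) := by
          rw [hlp]; ring
  refine ⟨part1, ?_⟩
  -- second inequality
  set L : ℝ := ∫ x' : Euc d, ‖u (ext0 x')‖ ^ p with hL
  have hL0 : 0 ≤ L :=
    integral_nonneg fun x => Real.rpow_nonneg (norm_nonneg _) _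
  have h1 : L ^ (1/p) ≤ (p * lpNorm p (halfSpace d) u ^ (p-1) * Y ^ (1/p)) ^ (1/p) :=
    Real.rpow_le_rpow hL0 part1 (by positivity)
  have h2 : (p * lpNorm p (halfSpace d) u ^ (p-1) * Y ^ (1/p)) ^ (1/p) =
      p ^ (1/p) * (lpNorm p (halfSpace d) u ^ (p-1)) ^ (1/p) * (Y ^ (1/p)) ^ (1/p) := by
    rw [Real.mul_rpow (mul_nonneg hp0.le (Real.rpow_nonneg hlpn0 _))
      (Real.rpow_nonneg hY0 _), Real.mul_rpow hp0.le (Real.rpow_nonneg hlpn0 _)]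
  have h3 : (lpNorm p (halfSpace d) u ^ (p-1)) ^ (1/p) =
      lpNorm p (halfSpace d) u ^ ((p-1)/p) := by
    rw [← Real.rpow_mul hlpn0]
    congr 1
    ring
  -- the sum dominating Y
  set S : ℝ := ∑ α : Fin (d+1) → Fin 2, if (∑ i, (α i : ℕ)) ≤ 1 then
      ∫ x in halfSpace d, ‖mder (fun i => (α i : ℕ)) u x‖ ^ p else 0 with hS
  have hsob : sobNorm 1 p (halfSpace d) (fun α => mder α u) = S ^ (1/p) := rfl
  have hYS : Y ≤ S := by
    set α₀ : Fin (d+1) → Fin 2 := fun i => if i = Fin.last d then 1 else 0 with hα₀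
    have hmd : (fun i => ((α₀ i : ℕ))) = (fun i : Fin (d+1) => if i = Fin.last d then 1 else 0) := by
      funext i
      simp [hα₀, apply_ite (fun x : Fin 2 => (x : ℕ))]
    have hsum : (∑ i, ((α₀ i : ℕ))) = 1 := by
      rw [show (fun i => ((α₀ i : ℕ))) = _ from hmd]
      simp
    have hterm : (if (∑ i, (α₀ i : ℕ)) ≤ 1 then
        ∫ x in halfSpace d, ‖mder (fun i => (α₀ i : ℕ)) u x‖ ^ p else 0) = Y := by
      rw [if_pos (le_of_eq hsum), hmd, mder_single, hY]
    rw [hS, ← hterm]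
    apply Finset.single_le_sum (f := fun α : Fin (d+1) → Fin 2 => if (∑ i, (α i : ℕ)) ≤ 1 then
        ∫ x in halfSpace d, ‖mder (fun i => (α i : ℕ)) u x‖ ^ p else 0) _ (Finset.mem_univ α₀)
    intro α _
    split
    · exact integral_nonneg fun x => Real.rpow_nonneg (norm_nonneg _) _
    · exact le_rfl
  have h4 : (Y ^ (1/p)) ^ (1/p) ≤ (S ^ (1/p)) ^ (1/p) :=
    Real.rpow_le_rpow (Real.rpow_nonneg hY0 _)
      (Real.rpow_le_rpow hY0 hYS (by positivity)) (by positivity)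
  calc L ^ (1/p) ≤ (p * lpNorm p (halfSpace d) u ^ (p-1) * Y ^ (1/p)) ^ (1/p) := h1
    _ = p ^ (1/p) * lpNorm p (halfSpace d) u ^ ((p-1)/p) * (Y ^ (1/p)) ^ (1/p) := by
        rw [h2, h3]
    _ ≤ p ^ (1/p) * lpNorm p (halfSpace d) u ^ ((p-1)/p) * (S ^ (1/p)) ^ (1/p) := by
        apply mul_le_mul_of_nonneg_left h4
        exact mul_nonneg (Real.rpow_nonneg hp0.le _) (Real.rpow_nonneg hlpn0 _)
    _ = p ^ (1/p) * lpNorm p (halfSpace d) u ^ ((p-1)/p) *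
        sobNorm 1 p (halfSpace d) (fun α => mder α u) ^ (1/p) := by rw [hsob]
end
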